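/- arXiv:2105.08899 — 3 statements merged into one kernel-verified Lean document; each statement's English description precedes it below -/
import Mathlib

section
/- Correctness of proxy re-encryption: given a second-level ciphertext (g^r, Z^m · Z^(a₁·r)) under Alice's key a₁ and the re-encryption key rk = g^(a₁·b₂), the pair (e(g^r, rk), Z^m · Z^(a₁·r)) equals (Z^(b₂·r'), Z^m · Z^(r')) with r' = a₁·r, i.e., it is a valid first-level ciphertext under Bob's key b₂, and Bob's decryption recovers Z^m. -/
/-- Correctness of proxy re-encryption: `(e(g^r, rk), Z^m·Z^(a₁·r))` with
`rk = g^(a₁·b₂)` is a valid first-level ciphertext under `b₂` with randomness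
`r' = a₁·r`, and Bob's decryption recovers `Z^m`. -/
theorem stmt_3 {q : ℕ} [Fact (Nat.Prime q)]
    {G1 G2 : Type*} [CommGroup G1] [CommGroup G2]
    [Fintype G1] [Fintype G2]
    (hG1 : Fintype.card G1 = q) (hG2 : Fintype.card G2 = q)
    (g : G1) (hg : ∀ x : G1, x ∈ Subgroup.zpowers g)
    (e : G1 → G1 → G2)
    (hbil : ∀ (x y : G1) (m n : ℤ), e (x ^ m) (y ^ n) = e x y ^ (m * n))
    (Z : G2) (hZdef : Z = e g g)
    (a₁ b₂ : (ZMod q)ˣ) (r m : ZMod q) (α rk : G1) (β : G2)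
    (hα : α = g ^ r.val)
    (hβ : β = Z ^ m.val * Z ^ (((a₁ : ZMod q) * r).val))
    (hrk : rk = g ^ (((a₁ : ZMod q) * (b₂ : ZMod q)).val)) :
    e α rk = Z ^ (((b₂ : ZMod q) * ((a₁ : ZMod q) * r)).val) ∧
    β * ((e α rk) ^ (((b₂⁻¹ : (ZMod q)ˣ) : ZMod q).val))⁻¹ = Z ^ m.val := by
  have hZord : orderOf Z ∣ q := hG2 ▸ orderOf_dvd_card
  -- exponents of Z can be reduced mod q
  have hpow : ∀ x y : ℕ, (x : ZMod q) = (y : ZMod q) → Z ^ x = Z ^ y := by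
    intro x y h
    rw [pow_eq_pow_iff_modEq]
    exact ((ZMod.natCast_eq_natCast_iff _ _ _).mp h).of_dvd hZord
  have key : e α rk = Z ^ (((b₂ : ZMod q) * ((a₁ : ZMod q) * r)).val) := by
    have h1 : e α rk = Z ^ (r.val * ((a₁ : ZMod q) * (b₂ : ZMod q)).val) := by
      rw [hα, hrk, hZdef]
      have := hbil g g (r.val : ℤ) ((((a₁ : ZMod q) * (b₂ : ZMod q)).val : ℕ) : ℤ)
      rw [zpow_natCast, zpow_natCast] at this
      rw [this, ← Int.natCast_mul, zpow_natCast]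
    rw [h1]
    apply hpow
    push_cast [ZMod.natCast_val, ZMod.cast_id]
    ring
  refine ⟨key, ?_⟩
  rw [key, hβ, ← pow_mul]
  have h2 : Z ^ ((((b₂ : ZMod q) * ((a₁ : ZMod q) * r)).val) * ((b₂⁻¹ : (ZMod q)ˣ) : ZMod q).val)
      = Z ^ (((a₁ : ZMod q) * r).val) := by
    apply hpow
    push_cast [ZMod.natCast_val, ZMod.cast_id]
    have hb : (b₂ : ZMod q) ≠ 0 := b₂.ne_zero
    field_simp
  rw [h2, mul_inv_cancel_right]
end

section
/- Correctness of self re-encryption: given a user's second-level ciphertext (g^r, Z^m · Z^(a₁·r)) and self re-encryption key rk = g^(a₁·a₂), the re-encrypted pair (e(g^r, rk), Z^m · Z^(a₁·r)) is a valid first-level ciphertext decryptable with key component a₂, recovering Z^m. -/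
/-- Correctness of self re-encryption: `(e(g^r, rk), Z^m·Z^(a₁·r))` with
`rk = g^(a₁·a₂)` is decryptable with key component `a₂`, recovering `Z^m`. -/
theorem stmt_14 {q : ℕ} [Fact (Nat.Prime q)]
    {G1 G2 : Type*} [CommGroup G1] [CommGroup G2]
    [Fintype G1] [Fintype G2]
    (hG1 : Fintype.card G1 = q) (hG2 : Fintype.card G2 = q)
    (g : G1) (hg : ∀ x : G1, x ∈ Subgroup.zpowers g)
    (e : G1 → G1 → G2)
    (hbil : ∀ (x y : G1) (m n : ℤ), e (x ^ m) (y ^ n) = e x y ^ (m * n))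
    (Z : G2) (hZdef : Z = e g g)
    (a₁ : ZMod q) (a₂ : (ZMod q)ˣ) (r m : ZMod q) (α rk : G1) (β : G2)
    (hα : α = g ^ r.val)
    (hβ : β = Z ^ m.val * Z ^ ((a₁ * r).val))
    (hrk : rk = g ^ ((a₁ * (a₂ : ZMod q)).val)) :
    β * ((e α rk) ^ (((a₂⁻¹ : (ZMod q)ˣ) : ZMod q).val))⁻¹ = Z ^ m.val := by
  have hZq : Z ^ q = 1 := by rw [← hG2]; exact pow_card_eq_one
  have hord : orderOf Z ∣ q := orderOf_dvd_of_pow_eq_one hZq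
  have key : ∀ s t : ℕ, ((s : ZMod q) = (t : ZMod q)) → Z ^ s = Z ^ t := by
    intro s t h
    have := (ZMod.natCast_eq_natCast_iff s t q).mp h
    exact pow_eq_pow_iff_modEq.mpr (this.of_dvd hord)
  have heα : e α rk = Z ^ (r.val * (a₁ * (a₂ : ZMod q)).val) := by
    rw [hα, hrk, hZdef]
    have := hbil g g (r.val : ℤ) ((a₁ * (a₂ : ZMod q)).val : ℤ)
    simpa [← zpow_natCast, ← Int.natCast_mul] using this
  rw [hβ, heα, ← pow_mul]
  have h2 : Z ^ (r.val * (a₁ * (a₂ : ZMod q)).val * ((a₂⁻¹ : (ZMod q)ˣ) : ZMod q).val)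
      = Z ^ ((a₁ * r).val) := by
    apply key
    push_cast [ZMod.natCast_val, ZMod.cast_id]
    field_simp
  rw [h2]
  group
end

section
/- Commutativity of re-encryption with the homomorphic product: re-encrypting the product of two second-level lifted-ElGamal ciphertexts (under key a₁, randomness r₁ and r₂) with re-encryption key g^(a₁·b₂) yields the same first-level ciphertext as the product of the individual re-encryptions. -/
/-- Second-level lifted-ElGamal encryption `E²(m; r)` under key `a`. -/
def E2 {q : ℕ} {G1 G2 : Type*} [CommGroup G1] [CommGroup G2]
    (g : G1) (Z : G2) (a m r : ZMod q) : G1 × G2 :=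
  (g ^ r.val, Z ^ m.val * Z ^ ((a * r).val))

def reenc {G1 G2 : Type*} (e : G1 → G1 → G2) (rk : G1) (ct : G1 × G2) : G2 × G2 :=
  (e ct.1 rk, ct.2)

section Pairing

variable {G H : Type*} [Group G] [Group H] {e : G → G → H}

theorem pairing_pow_left (hbil : ∀ (x y : G) (m n : ℤ), e (x ^ m) (y ^ n) = e x y ^ (m * n))
    (g z : G) (k : ℕ) : e (g ^ k) z = e g z ^ k := by
  simpa only [zpow_natCast, zpow_one, mul_one] using hbil g z k 1

theorem pairing_pow_mul_pow_left
    (hbil : ∀ (x y : G) (m n : ℤ), e (x ^ m) (y ^ n) = e x y ^ (m * n))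
    (g z : G) (m n : ℕ) : e (g ^ m * g ^ n) z = e (g ^ m) z * e (g ^ n) z := by
  simp only [← pow_add, pairing_pow_left hbil]

end Pairing

theorem reenc_mul {G1 G2 : Type*} [Mul G1] [Mul G2] (e : G1 → G1 → G2) (rk : G1)
    (c d : G1 × G2) (h : e (c.1 * d.1) rk = e c.1 rk * e d.1 rk) :
    reenc e rk (c * d) = reenc e rk c * reenc e rk d :=
  Prod.ext h rfl

theorem stmt_16_general {q : ℕ}
    {G1 G2 : Type*} [CommGroup G1] [CommGroup G2]
    (g : G1)
    (e : G1 → G1 → G2)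
    (hbil : ∀ (x y : G1) (m n : ℤ), e (x ^ m) (y ^ n) = e x y ^ (m * n))
    (Z : G2)
    (a₁ : ZMod q) (rk : G1)
    (m₁ m₂ r₁ r₂ : ZMod q) :
    reenc e rk (E2 g Z a₁ m₁ r₁ * E2 g Z a₁ m₂ r₂)
      = reenc e rk (E2 g Z a₁ m₁ r₁) * reenc e rk (E2 g Z a₁ m₂ r₂) :=
  reenc_mul e rk _ _ (pairing_pow_mul_pow_left hbil g rk r₁.val r₂.val)

/-- Re-encryption commutes with the homomorphic product: re-encrypting the
product of two second-level ciphertexts equals the product of the individual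
re-encryptions. -/
theorem stmt_16 {q : ℕ} [Fact (Nat.Prime q)]
    {G1 G2 : Type*} [CommGroup G1] [CommGroup G2]
    [Fintype G1] [Fintype G2]
    (hG1 : Fintype.card G1 = q) (hG2 : Fintype.card G2 = q)
    (g : G1) (hg : ∀ x : G1, x ∈ Subgroup.zpowers g)
    (e : G1 → G1 → G2)
    (hbil : ∀ (x y : G1) (m n : ℤ), e (x ^ m) (y ^ n) = e x y ^ (m * n))
    (Z : G2) (hZdef : Z = e g g)
    (a₁ b₂ : ZMod q) (rk : G1) (hrk : rk = g ^ ((a₁ * b₂).val))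
    (m₁ m₂ r₁ r₂ : ZMod q) :
    reenc e rk (E2 g Z a₁ m₁ r₁ * E2 g Z a₁ m₂ r₂)
      = reenc e rk (E2 g Z a₁ m₁ r₁) * reenc e rk (E2 g Z a₁ m₂ r₂) :=
  stmt_16_general g e hbil Z a₁ rk m₁ m₂ r₁ r₂
end
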